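/- arXiv:2503.15109 — 4 statements merged into one kernel-verified Lean document; each statement's English description precedes it below -/
import Mathlib

section
/- Let x* ∈ ℝⁿ with ‖x*‖₀ < s, g ∈ ℝⁿ, and τ > 0. Then x* = Π_S(x* − τ g) (i.e., x* is the unique projection of x* − τg onto the s-sparse set S) if and only if g = 0. -/
/-- For `x*` with `‖x*‖₀ < s ≤ n`, `g ∈ ℝⁿ` and `τ > 0`:  `x*` is the unique Euclidean
projection of `x* − τg` onto the `s`-sparse set `S` if and only if `g = 0`. -/
theorem unique_proj_iff_grad_zero {n : ℕ} (s : ℕ) (hsn : s ≤ n) (τ : ℝ) (hτ : 0 < τ)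
    (xs g : Fin n → ℝ)
    (hxs : (Finset.univ.filter fun i => xs i ≠ 0).card < s) :
    ({z : Fin n → ℝ | (Finset.univ.filter fun i => z i ≠ 0).card ≤ s ∧
        ∀ u : Fin n → ℝ, (Finset.univ.filter fun i => u i ≠ 0).card ≤ s →
          ∑ i, (z i - (xs i - τ * g i)) ^ 2 ≤ ∑ i, (u i - (xs i - τ * g i)) ^ 2}
      = {xs}) ↔ g = 0 := by
  constructor
  · intro hset
    have hmem : xs ∈ {z : Fin n → ℝ | (Finset.univ.filter fun i => z i ≠ 0).card ≤ s ∧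
        ∀ u : Fin n → ℝ, (Finset.univ.filter fun i => u i ≠ 0).card ≤ s →
          ∑ i, (z i - (xs i - τ * g i)) ^ 2 ≤ ∑ i, (u i - (xs i - τ * g i)) ^ 2} := by
      rw [hset]; rfl
    funext i
    set u : Fin n → ℝ := fun j => if j = i then xs i - τ * g i else xs j with hu
    have hcard : (Finset.univ.filter fun j => u j ≠ 0).card ≤ s := by
      have hsub : (Finset.univ.filter fun j => u j ≠ 0) ⊆
          insert i (Finset.univ.filter fun j => xs j ≠ 0) := by
        intro j hj
        simp only [Finset.mem_filter, Finset.mem_univ, true_and] at hj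
        by_cases hji : j = i
        · subst hji; exact Finset.mem_insert_self _ _
        · refine Finset.mem_insert_of_mem ?_
          simp only [Finset.mem_filter, Finset.mem_univ, true_and]
          simpa [hu, hji] using hj
      calc (Finset.univ.filter fun j => u j ≠ 0).card
          ≤ (insert i (Finset.univ.filter fun j => xs j ≠ 0)).card := Finset.card_le_card hsub
        _ ≤ (Finset.univ.filter fun j => xs j ≠ 0).card + 1 := Finset.card_insert_le _ _
        _ ≤ s := hxs
    have h2 := hmem.2 u hcard
    have hsplit : ∀ (f : Fin n → ℝ), ∑ j, f j = f i + ∑ j ∈ Finset.univ.erase i, f j :=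
      fun f => (Finset.add_sum_erase _ f (Finset.mem_univ i)).symm
    rw [hsplit, hsplit] at h2
    have heq : ∑ j ∈ Finset.univ.erase i, (xs j - (xs j - τ * g j)) ^ 2
        = ∑ j ∈ Finset.univ.erase i, (u j - (xs j - τ * g j)) ^ 2 := by
      refine Finset.sum_congr rfl fun j hj => ?_
      have : j ≠ i := Finset.ne_of_mem_erase hj
      simp [hu, this]
    rw [heq] at h2
    have hle : (xs i - (xs i - τ * g i)) ^ 2 ≤ (u i - (xs i - τ * g i)) ^ 2 := by linarith
    have hui : u i = xs i - τ * g i := by simp [hu]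
    rw [hui] at hle
    have : (τ * g i) ^ 2 ≤ 0 := by nlinarith
    have hτg : τ * g i = 0 := by nlinarith [sq_nonneg (τ * g i)]
    have := mul_eq_zero.mp hτg
    rcases this with h | h
    · exact absurd h (ne_of_gt hτ)
    · simpa using h
  · intro hg
    subst hg
    ext z
    simp only [Set.mem_setOf_eq, Set.mem_singleton_iff, mul_zero, sub_zero]
    constructor
    · rintro ⟨hc, hmin⟩
      have h0 := hmin xs (le_of_lt hxs)
      have h0' : ∑ i, (z i - xs i) ^ 2 ≤ 0 := by simpa using h0
      have hz : ∀ i ∈ Finset.univ, (z i - xs i) ^ 2 = 0 := by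
        rw [← Finset.sum_eq_zero_iff_of_nonneg (fun i _ => sq_nonneg _)]
        exact le_antisymm h0' (Finset.sum_nonneg fun i _ => sq_nonneg _)
      funext i
      have := hz i (Finset.mem_univ i)
      have : z i - xs i = 0 := by
        have := sq_eq_zero_iff.mp this
        exact this
      linarith
    · intro hz
      subst hz
      refine ⟨le_of_lt hxs, fun u _ => ?_⟩
      have : (0 : ℝ) ≤ ∑ i, (u i - z i) ^ 2 := Finset.sum_nonneg fun i _ => sq_nonneg _
      simpa using this
end

section
/- Let F : ℝᵖ → ℝᵖ be locally Lipschitz and suppose at a point y* there is a neighborhood N and a constant C > 0 such that for every y ∈ N and every W in the Clarke generalized Jacobian ∂F(y), W is invertible with ‖W⁻¹‖ ≤ C. Assume further F is strongly semismooth at y* and F(y*) = 0. Then for y ∈ N sufficiently close to y*, the Newton iterate z := y − W⁻¹F(y) (for any W ∈ ∂F(y)) satisfies ‖z − y*‖ = O(‖y − y*‖²). -/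
open Filter

/-- The Clarke generalized Jacobian of `F` at `x`: the convex hull of all limits of
Fréchet derivatives of `F` along sequences of differentiability points converging to `x`. -/
noncomputable def clarkeJacobian {p : ℕ}
    (F : EuclideanSpace ℝ (Fin p) → EuclideanSpace ℝ (Fin p))
    (x : EuclideanSpace ℝ (Fin p)) :
    Set (EuclideanSpace ℝ (Fin p) →L[ℝ] EuclideanSpace ℝ (Fin p)) :=
  convexHull ℝ {W | ∃ u : ℕ → EuclideanSpace ℝ (Fin p),
    (∀ m, DifferentiableAt ℝ F (u m)) ∧
    Tendsto u atTop (nhds x) ∧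
    Tendsto (fun m => fderiv ℝ F (u m)) atTop (nhds W)}

/-- `F` is strongly semismooth at `x`: it is directionally differentiable at `x`, and
for `Δ → 0` and any `H ∈ ∂F(x + Δ)`, `‖F(x+Δ) − F(x) − HΔ‖ = O(‖Δ‖²)`. -/
def StronglySemismoothAt {p : ℕ}
    (F : EuclideanSpace ℝ (Fin p) → EuclideanSpace ℝ (Fin p))
    (x : EuclideanSpace ℝ (Fin p)) : Prop :=
  (∀ d : EuclideanSpace ℝ (Fin p), ∃ L : EuclideanSpace ℝ (Fin p),
    Tendsto (fun t : ℝ => t⁻¹ • (F (x + t • d) - F x))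
      (nhdsWithin 0 (Set.Ioi 0)) (nhds L)) ∧
  ∃ C > (0 : ℝ), ∃ δ > (0 : ℝ), ∀ Δ : EuclideanSpace ℝ (Fin p), ‖Δ‖ < δ →
    ∀ H ∈ clarkeJacobian F (x + Δ), ‖F (x + Δ) - F x - H Δ‖ ≤ C * ‖Δ‖ ^ 2

/-- Local quadratic convergence of the semismooth Newton step: if `F` is locally Lipschitz,
strongly semismooth at a zero `y*`, and every generalized Jacobian near `y*` is invertible
with uniformly bounded inverse, then the Newton iterate `z = y − W⁻¹F(y)` satisfies
`‖z − y*‖ = O(‖y − y*‖²)` for `y` close enough to `y*`. -/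
theorem semismooth_newton_quadratic {p : ℕ}
    (F : EuclideanSpace ℝ (Fin p) → EuclideanSpace ℝ (Fin p))
    (ystar : EuclideanSpace ℝ (Fin p))
    (hLip : LocallyLipschitz F) (hF0 : F ystar = 0)
    (N : Set (EuclideanSpace ℝ (Fin p))) (hN : N ∈ nhds ystar)
    (C : ℝ) (hC : 0 < C)
    (hreg : ∀ y ∈ N, ∀ W ∈ clarkeJacobian F y,
      ∃ Winv : EuclideanSpace ℝ (Fin p) →L[ℝ] EuclideanSpace ℝ (Fin p),
        Winv.comp W = ContinuousLinearMap.id ℝ (EuclideanSpace ℝ (Fin p)) ∧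
        W.comp Winv = ContinuousLinearMap.id ℝ (EuclideanSpace ℝ (Fin p)) ∧
        ‖Winv‖ ≤ C)
    (hss : StronglySemismoothAt F ystar) :
    ∃ K > (0 : ℝ), ∃ δ > (0 : ℝ), ∀ y : EuclideanSpace ℝ (Fin p),
      ‖y - ystar‖ < δ → y ∈ N →
      ∀ W ∈ clarkeJacobian F y,
      ∀ Winv : EuclideanSpace ℝ (Fin p) →L[ℝ] EuclideanSpace ℝ (Fin p),
        Winv.comp W = ContinuousLinearMap.id ℝ (EuclideanSpace ℝ (Fin p)) →
        W.comp Winv = ContinuousLinearMap.id ℝ (EuclideanSpace ℝ (Fin p)) →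
        ‖Winv‖ ≤ C →
        ‖(y - Winv (F y)) - ystar‖ ≤ K * ‖y - ystar‖ ^ 2 := by
  obtain ⟨-, C₀, hC₀, δ, hδ, hbound⟩ := hss
  refine ⟨C * C₀, mul_pos hC hC₀, δ, hδ, ?_⟩
  intro y hy hyN W hW Winv h1 h2 hWC
  have hW' : W ∈ clarkeJacobian F (ystar + (y - ystar)) := by
    simpa using hW
  have hres := hbound (y - ystar) hy W hW'
  simp only [add_sub_cancel, hF0, sub_zero] at hres
  have hid : ∀ v, Winv (W v) = v := by
    intro v
    have := congrArg (fun T : EuclideanSpace ℝ (Fin p) →L[ℝ] EuclideanSpace ℝ (Fin p) => T v) h1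
    simpa using this
  have key : (y - Winv (F y)) - ystar = Winv (W (y - ystar) - F y) := by
    rw [map_sub, hid]
    abel
  rw [key]
  calc ‖Winv (W (y - ystar) - F y)‖ ≤ ‖Winv‖ * ‖W (y - ystar) - F y‖ :=
        Winv.le_opNorm _
    _ ≤ C * (C₀ * ‖y - ystar‖ ^ 2) := by
        apply mul_le_mul hWC ?_ (norm_nonneg _) (le_of_lt hC)
        rw [show W (y - ystar) - F y = -(F y - W (y - ystar)) by abel, norm_neg]
        exact hres
    _ = C * C₀ * ‖y - ystar‖ ^ 2 := by ring
end

section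
/- Let F : ℝᵖ → ℝᵖ be locally Lipschitz, F(y*) = 0, and suppose in a neighborhood of y* every generalized Jacobian W ∈ ∂F(y) is invertible with uniformly bounded inverse ‖W⁻¹‖ ≤ C, the Jacobians are uniformly bounded ‖W‖ ≤ c, and F is strongly semismooth at y*. Then for any ε ∈ (0,1) there is a smaller neighborhood such that for y in it and z := y − W⁻¹F(y), one has ‖F(z)‖ ≤ ε‖F(y)‖. -/
open Filter

set_option maxHeartbeats 1000000 in
/-- Descent property of the semismooth Newton step near a zero `y*` of `F`: if all
generalized Jacobians near `y*` are invertible with `‖W⁻¹‖ ≤ C` and `‖W‖ ≤ c`, and `F` is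
locally Lipschitz and strongly semismooth at `y*`, then for any `ε ∈ (0,1)` there is a
neighborhood in which the Newton iterate `z = y − W⁻¹F(y)` satisfies `‖F(z)‖ ≤ ε‖F(y)‖`. -/
theorem semismooth_newton_residual_descent {p : ℕ}
    (F : EuclideanSpace ℝ (Fin p) → EuclideanSpace ℝ (Fin p))
    (ystar : EuclideanSpace ℝ (Fin p))
    (hLip : LocallyLipschitz F) (hF0 : F ystar = 0)
    (N : Set (EuclideanSpace ℝ (Fin p))) (hN : N ∈ nhds ystar)
    (C c : ℝ) (hC : 0 < C) (hc : 0 < c)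
    (hbd : ∀ y ∈ N, ∀ W ∈ clarkeJacobian F y, ‖W‖ ≤ c)
    (hreg : ∀ y ∈ N, ∀ W ∈ clarkeJacobian F y,
      ∃ Winv : EuclideanSpace ℝ (Fin p) →L[ℝ] EuclideanSpace ℝ (Fin p),
        Winv.comp W = ContinuousLinearMap.id ℝ (EuclideanSpace ℝ (Fin p)) ∧
        W.comp Winv = ContinuousLinearMap.id ℝ (EuclideanSpace ℝ (Fin p)) ∧
        ‖Winv‖ ≤ C)
    (hss : StronglySemismoothAt F ystar) :
    ∀ ε ∈ Set.Ioo (0 : ℝ) 1, ∃ δ > (0 : ℝ), ∀ y : EuclideanSpace ℝ (Fin p),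
      ‖y - ystar‖ < δ → y ∈ N →
      ∀ W ∈ clarkeJacobian F y,
      ∀ Winv : EuclideanSpace ℝ (Fin p) →L[ℝ] EuclideanSpace ℝ (Fin p),
        Winv.comp W = ContinuousLinearMap.id ℝ (EuclideanSpace ℝ (Fin p)) →
        W.comp Winv = ContinuousLinearMap.id ℝ (EuclideanSpace ℝ (Fin p)) →
        ‖Winv‖ ≤ C →
        ‖F (y - Winv (F y))‖ ≤ ε * ‖F y‖ := by
  obtain ⟨Cs, hCs, δs, hδs, hsem⟩ := hss.2
  obtain ⟨K, t, ht, hK⟩ := hLip ystar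
  obtain ⟨r, hr, hball⟩ := Metric.mem_nhds_iff.mp ht
  set A := Cs * C with hA
  have hApos : 0 < A := mul_pos hCs hC
  intro ε hε
  obtain ⟨hε0, hε1⟩ := hε
  set D := 2 * ((K : ℝ) + 1) * A * C with hD
  have hDpos : 0 < D := by positivity
  refine ⟨min (min δs r) (min (1 / (2 * A)) (ε / D)), by positivity, ?_⟩
  intro y hy hyN W hW Winv h1 h2 h3
  have hyδs : ‖y - ystar‖ < δs :=
    lt_of_lt_of_le hy ((min_le_left _ _).trans (min_le_left _ _))
  have hyr : ‖y - ystar‖ < r :=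
    lt_of_lt_of_le hy ((min_le_left _ _).trans (min_le_right _ _))
  have hyA : ‖y - ystar‖ < 1 / (2 * A) :=
    lt_of_lt_of_le hy ((min_le_right _ _).trans (min_le_left _ _))
  have hyε : ‖y - ystar‖ < ε / D :=
    lt_of_lt_of_le hy ((min_le_right _ _).trans (min_le_right _ _))
  have hinv : ∀ v, Winv (W v) = v := by
    intro v
    have := ContinuousLinearMap.ext_iff.mp h1 v
    simpa using this
  -- semismooth bound at Δ = y - ystar
  have hyeq : ystar + (y - ystar) = y := by abel
  have hsemy : ‖F y - W (y - ystar)‖ ≤ Cs * ‖y - ystar‖ ^ 2 := by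
    have h := hsem (y - ystar) hyδs W (by rwa [hyeq])
    rwa [hyeq, hF0, sub_zero] at h
  -- lower bound on ‖F y‖
  have key1 : ‖y - ystar‖ ≤ C * ‖F y‖ + A * ‖y - ystar‖ ^ 2 := by
    have e1 : ‖y - ystar‖ ≤ C * ‖W (y - ystar)‖ := by
      calc ‖y - ystar‖ = ‖Winv (W (y - ystar))‖ := by rw [hinv]
        _ ≤ ‖Winv‖ * ‖W (y - ystar)‖ := Winv.le_opNorm _
        _ ≤ C * ‖W (y - ystar)‖ :=
            mul_le_mul_of_nonneg_right h3 (norm_nonneg _)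
    have e2 : ‖W (y - ystar)‖ ≤ ‖F y‖ + Cs * ‖y - ystar‖ ^ 2 := by
      calc ‖W (y - ystar)‖ = ‖F y - (F y - W (y - ystar))‖ := by rw [sub_sub_cancel]
        _ ≤ ‖F y‖ + ‖F y - W (y - ystar)‖ := norm_sub_le _ _
        _ ≤ ‖F y‖ + Cs * ‖y - ystar‖ ^ 2 := by linarith
    nlinarith [mul_le_mul_of_nonneg_left e2 hC.le]
  have hAn : A * ‖y - ystar‖ < 1 / 2 := by
    have h := mul_lt_mul_of_pos_left hyA hApos
    have hhalf : A * (1 / (2 * A)) = 1 / 2 := by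
      field_simp
    rwa [hhalf] at h
  have key2 : ‖y - ystar‖ ≤ 2 * C * ‖F y‖ := by
    nlinarith [key1, hAn, norm_nonneg (y - ystar)]
  -- bound on ‖z - ystar‖
  set z := y - Winv (F y) with hzdef
  have hz : z - ystar = Winv (W (y - ystar) - F y) := by
    rw [map_sub, hinv, hzdef]
    abel
  have hznorm : ‖z - ystar‖ ≤ A * ‖y - ystar‖ ^ 2 := by
    rw [hz]
    calc ‖Winv (W (y - ystar) - F y)‖ ≤ ‖Winv‖ * ‖W (y - ystar) - F y‖ :=
          Winv.le_opNorm _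
      _ ≤ C * ‖W (y - ystar) - F y‖ :=
          mul_le_mul_of_nonneg_right h3 (norm_nonneg _)
      _ = C * ‖F y - W (y - ystar)‖ := by rw [norm_sub_rev]
      _ ≤ C * (Cs * ‖y - ystar‖ ^ 2) :=
          mul_le_mul_of_nonneg_left hsemy hC.le
      _ = A * ‖y - ystar‖ ^ 2 := by ring
  -- z is in the Lipschitz neighborhood
  have hsq : A * ‖y - ystar‖ ^ 2 ≤ (1 / 2) * ‖y - ystar‖ := by
    have h' := mul_le_mul_of_nonneg_right hAn.le (norm_nonneg (y - ystar))
    calc A * ‖y - ystar‖ ^ 2 = (A * ‖y - ystar‖) * ‖y - ystar‖ := by ring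
      _ ≤ (1 / 2) * ‖y - ystar‖ := h'
  have hzr : ‖z - ystar‖ < r := by
    linarith [hznorm, hyr, norm_nonneg (y - ystar)]
  have hzt : z ∈ t := hball (by simpa [Metric.mem_ball, dist_eq_norm] using hzr)
  have hyt : ystar ∈ t := hball (by simp [Metric.mem_ball, hr])
  -- Lipschitz bound
  have hFz : ‖F z‖ ≤ (K : ℝ) * ‖z - ystar‖ := by
    have := hK.dist_le_mul z hzt ystar hyt
    rwa [dist_eq_norm, dist_eq_norm, hF0, sub_zero] at this
  -- final chain
  have hDn : ‖y - ystar‖ * D < ε := (lt_div_iff₀ hDpos).mp hyε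
  have hcoef : 2 * (K : ℝ) * A * C * ‖y - ystar‖ ≤ ε := by
    nlinarith [hDn, mul_nonneg (mul_nonneg hApos.le hC.le) (norm_nonneg (y - ystar))]
  calc ‖F z‖ ≤ (K : ℝ) * ‖z - ystar‖ := hFz
    _ ≤ (K : ℝ) * (A * ‖y - ystar‖ ^ 2) :=
        mul_le_mul_of_nonneg_left hznorm K.coe_nonneg
    _ = ((K : ℝ) * A * ‖y - ystar‖) * ‖y - ystar‖ := by ring
    _ ≤ ((K : ℝ) * A * ‖y - ystar‖) * (2 * C * ‖F y‖) := by
        apply mul_le_mul_of_nonneg_left key2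
        positivity
    _ = (2 * (K : ℝ) * A * C * ‖y - ystar‖) * ‖F y‖ := by ring
    _ ≤ ε * ‖F y‖ := mul_le_mul_of_nonneg_right hcoef (norm_nonneg _)
end

section
/- Let f₀(x) = ½xᵀQ₀x + q₀ᵀx + c₀ with Q₀ symmetric positive semidefinite, and let constraint functions f_i (i = 1,…,k) be convex quadratics with PSD Hessians, A ∈ ℝ^{m×n}, b ∈ ℝ^m. Suppose x* with ‖x*‖₀ = s is a P-stationary point: there exist multipliers (ν*, μ*, λ*) with μ* ≥ 0, λ* ≥ 0, complementarity μ*_i f_i(x*) = 0 and ⟨λ*, Ax* − b⟩ = 0, feasibility f_i(x*) ≤ 0 and Ax* ≤ b, ν*_j = 0 off the support Γ of x*, the gradient condition (∇f₀(x*) + Σμ*_i∇f_i(x*) + Aᵀλ* + ν*)_Γ = 0, and ν*_Γ lies in the normal cone of a product of intervals 𝕏_Γ at x*_Γ. Then x* is a local minimizer of f₀ over {x : f_i(x) ≤ 0, Ax ≤ b, ‖x‖₀ ≤ s, x ∈ 𝕏}: there is r > 0 such that f₀(x*) ≤ f₀(x) for all feasible x with ‖x − x*‖ < r. -/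
/-!
Near `x*` no coordinate in the support `Γ` of `x*` can vanish, so a nearby point with
`‖x‖₀ ≤ ‖x*‖₀` has support exactly `Γ`. For such `x`, feasibility,
convexity of the Lagrangian `L = f₀ + Σ μ*_i f_i + ⟨λ*, A · - b⟩` and complementarity give
`f₀(x) ≥ L(x) ≥ L(x*) + ⟨∇L(x*), x - x*⟩ = f₀(x*) + ⟨∇L(x*), x - x*⟩`, and the last inner product
is `-⟨ν*_Γ, x_Γ - x*_Γ⟩ ≥ 0` by the gradient and normal-cone conditions.
-/

open Matrix

/-- The quadratic function `x ↦ ½xᵀQx + qᵀx + c`. -/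
noncomputable def quadFun {n : ℕ} (Q : Matrix (Fin n) (Fin n) ℝ) (q : Fin n → ℝ) (c : ℝ)
    (x : Fin n → ℝ) : ℝ :=
  (1 / 2) * (x ⬝ᵥ Q.mulVec x) + q ⬝ᵥ x + c

open Filter Topology

theorem quadFun_add_dotProduct_sub_le {n : ℕ} {Q : Matrix (Fin n) (Fin n) ℝ} (hQ : Q.PosSemidef)
    (q : Fin n → ℝ) (c : ℝ) (x y : Fin n → ℝ) :
    quadFun Q q c y + (Q *ᵥ y + q) ⬝ᵥ (x - y) ≤ quadFun Q q c x := by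
  have hsymm : x ⬝ᵥ Q *ᵥ y = y ⬝ᵥ Q *ᵥ x := by
    rw [dotProduct_mulVec, ← mulVec_transpose, show Qᵀ = Q from hQ.1, dotProduct_comm]
  have hnonneg : 0 ≤ (x - y) ⬝ᵥ Q *ᵥ (x - y) := by
    simpa using hQ.dotProduct_mulVec_nonneg (x - y)
  simp only [quadFun, mulVec_sub, dotProduct_sub, sub_dotProduct, add_dotProduct] at hnonneg ⊢
  nlinarith [dotProduct_comm (Q *ᵥ y) x, dotProduct_comm (Q *ᵥ y) y]

noncomputable def lagrangian {n k m : ℕ} (Q0 : Matrix (Fin n) (Fin n) ℝ) (q0 : Fin n → ℝ) (c0 : ℝ)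
    (Q : Fin k → Matrix (Fin n) (Fin n) ℝ) (q : Fin k → Fin n → ℝ) (c : Fin k → ℝ)
    (A : Matrix (Fin m) (Fin n) ℝ) (b : Fin m → ℝ) (μ : Fin k → ℝ) (lam : Fin m → ℝ)
    (x : Fin n → ℝ) : ℝ :=
  quadFun Q0 q0 c0 x + ∑ i, μ i * quadFun (Q i) (q i) (c i) x + lam ⬝ᵥ (A *ᵥ x - b)

def lagrangianGrad {n k m : ℕ} (Q0 : Matrix (Fin n) (Fin n) ℝ) (q0 : Fin n → ℝ)
    (Q : Fin k → Matrix (Fin n) (Fin n) ℝ) (q : Fin k → Fin n → ℝ)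
    (A : Matrix (Fin m) (Fin n) ℝ) (μ : Fin k → ℝ) (lam : Fin m → ℝ)
    (x : Fin n → ℝ) : Fin n → ℝ :=
  Q0 *ᵥ x + q0 + ∑ i, μ i • (Q i *ᵥ x + q i) + Aᵀ *ᵥ lam

section Lagrangian

variable {n k m : ℕ} {Q0 : Matrix (Fin n) (Fin n) ℝ} {q0 : Fin n → ℝ} {c0 : ℝ}
  {Q : Fin k → Matrix (Fin n) (Fin n) ℝ} {q : Fin k → Fin n → ℝ} {c : Fin k → ℝ}
  {A : Matrix (Fin m) (Fin n) ℝ} {b : Fin m → ℝ} {μ : Fin k → ℝ} {lam : Fin m → ℝ}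

theorem lagrangian_le_quadFun (hμ : ∀ i, 0 ≤ μ i) (hlam : ∀ j, 0 ≤ lam j) {x : Fin n → ℝ}
    (hfq : ∀ i, quadFun (Q i) (q i) (c i) x ≤ 0) (hfA : ∀ j, (A *ᵥ x) j ≤ b j) :
    lagrangian Q0 q0 c0 Q q c A b μ lam x ≤ quadFun Q0 q0 c0 x := by
  have hμf : ∑ i, μ i * quadFun (Q i) (q i) (c i) x ≤ 0 :=
    Finset.sum_nonpos fun i _ => mul_nonpos_of_nonneg_of_nonpos (hμ i) (hfq i)
  have hlamf : lam ⬝ᵥ (A *ᵥ x - b) ≤ 0 :=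
    Finset.sum_nonpos fun j _ => mul_nonpos_of_nonneg_of_nonpos (hlam j) (sub_nonpos.2 (hfA j))
  unfold lagrangian
  linarith

theorem lagrangian_eq_quadFun {x : Fin n → ℝ} (hcompμ : ∀ i, μ i * quadFun (Q i) (q i) (c i) x = 0)
    (hcomplam : lam ⬝ᵥ (A *ᵥ x - b) = 0) :
    lagrangian Q0 q0 c0 Q q c A b μ lam x = quadFun Q0 q0 c0 x := by
  simp [lagrangian, hcompμ, hcomplam]

theorem lagrangian_add_dotProduct_sub_le (hQ0 : Q0.PosSemidef) (hQ : ∀ i, (Q i).PosSemidef)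
    (hμ : ∀ i, 0 ≤ μ i) (x y : Fin n → ℝ) :
    lagrangian Q0 q0 c0 Q q c A b μ lam y + lagrangianGrad Q0 q0 Q q A μ lam y ⬝ᵥ (x - y) ≤
      lagrangian Q0 q0 c0 Q q c A b μ lam x := by
  have hconstr : ∑ i, μ i * quadFun (Q i) (q i) (c i) y +
      ∑ i, μ i * ((Q i *ᵥ y + q i) ⬝ᵥ (x - y)) ≤ ∑ i, μ i * quadFun (Q i) (q i) (c i) x := by
    rw [← Finset.sum_add_distrib]
    refine Finset.sum_le_sum fun i _ => ?_
    rw [← mul_add]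
    exact mul_le_mul_of_nonneg_left (quadFun_add_dotProduct_sub_le (hQ i) _ _ x y) (hμ i)
  have hlin : lam ⬝ᵥ (A *ᵥ x - b) = lam ⬝ᵥ (A *ᵥ y - b) + Aᵀ *ᵥ lam ⬝ᵥ (x - y) := by
    rw [mulVec_transpose, ← dotProduct_mulVec]
    simp only [mulVec_sub, dotProduct_sub]
    ring
  have hgrad : lagrangianGrad Q0 q0 Q q A μ lam y ⬝ᵥ (x - y) = (Q0 *ᵥ y + q0) ⬝ᵥ (x - y) +
      ∑ i, μ i * ((Q i *ᵥ y + q i) ⬝ᵥ (x - y)) + Aᵀ *ᵥ lam ⬝ᵥ (x - y) := by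
    simp only [lagrangianGrad, add_dotProduct, sum_dotProduct, smul_dotProduct, smul_eq_mul]
  have hobj := quadFun_add_dotProduct_sub_le hQ0 q0 c0 x y
  unfold lagrangian
  linarith

end Lagrangian

theorem dotProduct_sub_nonneg_of_mem_normalCone {ι : Type*} [Fintype ι] {g ν x x₀ : ι → ℝ}
    {X : ι → Set ℝ} (hgrad : ∀ j, x₀ j ≠ 0 → g j + ν j = 0)
    (hnormal : ∀ j, x₀ j ≠ 0 → ∀ t ∈ X j, ν j * (t - x₀ j) ≤ 0) (hx : ∀ j, x j ∈ X j)
    (hzero : ∀ j, x₀ j = 0 → x j = 0) : 0 ≤ g ⬝ᵥ (x - x₀) := by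
  refine Finset.sum_nonneg fun j _ => ?_
  by_cases hj : x₀ j = 0
  · simp [hj, hzero j hj]
  · rw [Pi.sub_apply, eq_neg_of_add_eq_zero_left (hgrad j hj), neg_mul]
    exact neg_nonneg.2 (hnormal j hj (x j) (hx j))

theorem eventually_ne_zero_of_ne_zero {ι M : Type*} [Finite ι] [TopologicalSpace M] [T1Space M]
    [Zero M] (x₀ : ι → M) : ∀ᶠ x in 𝓝 x₀, ∀ i, x₀ i ≠ 0 → x i ≠ 0 := by
  refine eventually_all.2 fun i => ?_
  by_cases hi : x₀ i = 0
  · exact .of_forall fun _ h => absurd hi h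
  · exact ((continuous_apply i).continuousAt.eventually_ne hi).mono fun _ hx _ => hx

theorem eq_zero_of_card_support_le {ι M : Type*} [Fintype ι] [Zero M] [DecidableEq M]
    {x x₀ : ι → M} (hsub : ∀ i, x₀ i ≠ 0 → x i ≠ 0)
    (hcard : (Finset.univ.filter fun i => x i ≠ 0).card ≤
      (Finset.univ.filter fun i => x₀ i ≠ 0).card) (j : ι) (hj : x₀ j = 0) : x j = 0 := by
  have hsupp : (Finset.univ.filter fun i => x₀ i ≠ 0) = Finset.univ.filter fun i => x i ≠ 0 :=
    Finset.eq_of_subset_of_card_le (fun i hi => by simpa using hsub i (by simpa using hi)) hcard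
  by_contra hxj
  have hj' : j ∈ Finset.univ.filter fun i => x₀ i ≠ 0 :=
    hsupp ▸ Finset.mem_filter.2 ⟨Finset.mem_univ j, hxj⟩
  exact (Finset.mem_filter.1 hj').2 hj

theorem dist_le_sqrt_sum_sq {ι : Type*} [Fintype ι] (x y : ι → ℝ) :
    dist x y ≤ √(∑ i, (x i - y i) ^ 2) :=
  (dist_pi_le_iff (Real.sqrt_nonneg _)).2 fun i => Real.abs_le_sqrt <|
    Finset.single_le_sum (f := fun j => (x j - y j) ^ 2) (fun _ _ => sq_nonneg _)
      (Finset.mem_univ i)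

theorem pstationary_local_min_general {n k m s : ℕ}
    (Q0 : Matrix (Fin n) (Fin n) ℝ) (q0 : Fin n → ℝ) (c0 : ℝ) (hQ0 : Q0.PosSemidef)
    (Q : Fin k → Matrix (Fin n) (Fin n) ℝ) (q : Fin k → Fin n → ℝ) (c : Fin k → ℝ)
    (hQ : ∀ i, (Q i).PosSemidef)
    (A : Matrix (Fin m) (Fin n) ℝ) (b : Fin m → ℝ)
    (X : Fin n → Set ℝ)
    (xs : Fin n → ℝ) (ν : Fin n → ℝ) (μ : Fin k → ℝ) (lam : Fin m → ℝ)
    (hsupp : (Finset.univ.filter fun i => xs i ≠ 0).card = s)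
    (hμ : ∀ i, 0 ≤ μ i) (hlam : ∀ j, 0 ≤ lam j)
    (hcompμ : ∀ i, μ i * quadFun (Q i) (q i) (c i) xs = 0)
    (hcomplam : ∑ j, lam j * (A.mulVec xs j - b j) = 0)
    (hgrad : ∀ j, xs j ≠ 0 →
      Q0.mulVec xs j + q0 j + (∑ i, μ i * ((Q i).mulVec xs j + q i j))
        + A.transpose.mulVec lam j + ν j = 0)
    (hnormal : ∀ j, xs j ≠ 0 → ∀ t ∈ X j, ν j * (t - xs j) ≤ 0) :
    ∃ r > (0 : ℝ), ∀ x : Fin n → ℝ,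
      (∀ i, quadFun (Q i) (q i) (c i) x ≤ 0) →
      (∀ j, A.mulVec x j ≤ b j) →
      (Finset.univ.filter fun i => x i ≠ 0).card ≤ s →
      (∀ i, x i ∈ X i) →
      Real.sqrt (∑ i, (x i - xs i) ^ 2) < r →
      quadFun Q0 q0 c0 xs ≤ quadFun Q0 q0 c0 x := by
  obtain ⟨r, hr, hball⟩ := Metric.eventually_nhds_iff.1 (eventually_ne_zero_of_ne_zero xs)
  refine ⟨r, hr, fun x hfq hfA hcard hxX hdist => ?_⟩
  have hzero : ∀ j, xs j = 0 → x j = 0 :=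
    eq_zero_of_card_support_le (hball ((dist_le_sqrt_sum_sq x xs).trans_lt hdist))
      (hcard.trans hsupp.ge)
  have hgradL : ∀ j, xs j ≠ 0 → lagrangianGrad Q0 q0 Q q A μ lam xs j + ν j = 0 := fun j hj => by
    simpa only [lagrangianGrad, Pi.add_apply, Finset.sum_apply, Pi.smul_apply, smul_eq_mul] using
      hgrad j hj
  calc quadFun Q0 q0 c0 xs = lagrangian Q0 q0 c0 Q q c A b μ lam xs :=
        (lagrangian_eq_quadFun hcompμ hcomplam).symm
    _ ≤ lagrangian Q0 q0 c0 Q q c A b μ lam xs +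
          lagrangianGrad Q0 q0 Q q A μ lam xs ⬝ᵥ (x - xs) :=
        le_add_of_nonneg_right
          (dotProduct_sub_nonneg_of_mem_normalCone hgradL hnormal hxX hzero)
    _ ≤ lagrangian Q0 q0 c0 Q q c A b μ lam x := lagrangian_add_dotProduct_sub_le hQ0 hQ hμ x xs
    _ ≤ quadFun Q0 q0 c0 x := lagrangian_le_quadFun hμ hlam hfq hfA

/-- First-order sufficient condition for SQCQP: a P-stationary point `x*` with full
sparsity `‖x*‖₀ = s`, for convex quadratic objective and constraints (PSD Hessians),
linear constraints `Ax ≤ b`, and box set `𝕏 = Π_i X_i`, is a local minimizer of the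
sparse QCQP: there is `r > 0` such that `f₀(x*) ≤ f₀(x)` for all feasible `x` with
`‖x − x*‖ < r`. -/
theorem pstationary_local_min {n k m s : ℕ}
    (Q0 : Matrix (Fin n) (Fin n) ℝ) (q0 : Fin n → ℝ) (c0 : ℝ) (hQ0 : Q0.PosSemidef)
    (Q : Fin k → Matrix (Fin n) (Fin n) ℝ) (q : Fin k → Fin n → ℝ) (c : Fin k → ℝ)
    (hQ : ∀ i, (Q i).PosSemidef)
    (A : Matrix (Fin m) (Fin n) ℝ) (b : Fin m → ℝ)
    (X : Fin n → Set ℝ) (hX : ∀ i, Convex ℝ (X i)) (hX0 : ∀ i, (0 : ℝ) ∈ X i)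
    (xs : Fin n → ℝ) (ν : Fin n → ℝ) (μ : Fin k → ℝ) (lam : Fin m → ℝ)
    (hsupp : (Finset.univ.filter fun i => xs i ≠ 0).card = s)
    (hμ : ∀ i, 0 ≤ μ i) (hlam : ∀ j, 0 ≤ lam j)
    (hcompμ : ∀ i, μ i * quadFun (Q i) (q i) (c i) xs = 0)
    (hcomplam : ∑ j, lam j * (A.mulVec xs j - b j) = 0)
    (hfeasq : ∀ i, quadFun (Q i) (q i) (c i) xs ≤ 0)
    (hfeasA : ∀ j, A.mulVec xs j ≤ b j)
    (hfeasX : ∀ i, xs i ∈ X i)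
    (hνoff : ∀ j, xs j = 0 → ν j = 0)
    (hgrad : ∀ j, xs j ≠ 0 →
      Q0.mulVec xs j + q0 j + (∑ i, μ i * ((Q i).mulVec xs j + q i j))
        + A.transpose.mulVec lam j + ν j = 0)
    (hnormal : ∀ j, xs j ≠ 0 → ∀ t ∈ X j, ν j * (t - xs j) ≤ 0) :
    ∃ r > (0 : ℝ), ∀ x : Fin n → ℝ,
      (∀ i, quadFun (Q i) (q i) (c i) x ≤ 0) →
      (∀ j, A.mulVec x j ≤ b j) →
      (Finset.univ.filter fun i => x i ≠ 0).card ≤ s →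
      (∀ i, x i ∈ X i) →
      Real.sqrt (∑ i, (x i - xs i) ^ 2) < r →
      quadFun Q0 q0 c0 xs ≤ quadFun Q0 q0 c0 x :=
  pstationary_local_min_general Q0 q0 c0 hQ0 Q q c hQ A b X xs ν μ lam hsupp hμ hlam hcompμ hcomplam
    hgrad hnormal
end
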